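/- For all n, (4·B_n)² = 2·(L_{2n+1} + 2), where B_0 = 1, B_1 = 5, B_n = 6B_{n-1} - B_{n-2} and L_0 = 2, L_1 = 6, L_n = 6L_{n-1} - L_{n-2}. -/
import Mathlib


def B : ℕ → ℤ
  | 0 => 1
  | 1 => 5
  | (n+2) => 6 * B (n+1) - B n

def L : ℕ → ℤ
  | 0 => 2
  | 1 => 6
  | (n+2) => 6 * L (n+1) - L n

lemma B_inv (n : ℕ) : B (n+1)^2 + B n ^2 + 4 = 6 * B n * B (n+1) := by
  induction n with
  | zero => norm_num [B]
  | succ n ih =>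
    have hB : B (n+2) = 6 * B (n+1) - B n := rfl
    rw [hB]; linear_combination ih

lemma key (n : ℕ) : 8 * B n ^ 2 = L (2*n+1) + 2 ∧ 8 * B n * B (n+1) = L (2*n+2) + 6 := by
  induction n with
  | zero => constructor <;> norm_num [B, L]
  | succ n ih =>
    obtain ⟨h1, h2⟩ := ih
    have e1 : 2*(n+1)+1 = (2*n+1)+2 := by ring
    have e2 : 2*(n+1)+2 = (2*n+2)+2 := by ring
    have hL1 : L ((2*n+1)+2) = 6 * L ((2*n+1)+1) - L (2*n+1) := rfl
    have hL2 : L ((2*n+2)+2) = 6 * L ((2*n+2)+1) - L (2*n+2) := rfl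
    have hi : (2*n+1)+1 = 2*n+2 := by ring
    have hi2 : (2*n+2)+1 = (2*n+1)+2 := by ring
    have hB : B (n+2) = 6 * B (n+1) - B n := rfl
    have g1 : 8 * B (n+1) ^ 2 = L (2*(n+1)+1) + 2 := by
      rw [e1, hL1, hi]
      linear_combination 6 * h2 - h1 + 8 * B_inv n
    refine ⟨g1, ?_⟩
    rw [e2, hL2, hi2, hB]
    rw [e1] at g1
    linear_combination 6 * g1 - h2

theorem stmt9 (n : ℕ) : (4 * B n)^2 = 2 * (L (2*n+1) + 2) := by
  linear_combination 2 * (key n).1
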